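/- arXiv:2203.02009 — 4 statements merged into one kernel-verified Lean document; each statement's English description precedes it below -/
import Mathlib

section
/- Let ℓ be a prime, let V be a 4-dimensional vector space over 𝔽_ℓ = ℤ/ℓℤ with a nondegenerate alternating bilinear form ω, let q ∈ 𝔽_ℓ be nonzero, and let π : V → V be a linear endomorphism satisfying ω(π x, π y) = q·ω(x, y) for all x, y ∈ V. Suppose K ⊆ V is a 2-dimensional totally isotropic subspace with π(K) ⊆ K, and write the characteristic polynomial of the restriction of π to K as P = X² + cX + d. Then d ≠ 0 and the characteristic polynomial of π equals P·(X² + (cq/d)·X + q²/d), i.e. χ(π) = P·Rec_q(P). (This is the linear-algebraic content of Proposition 'siegel-elkies-charpoly': if f : A → A' is an ℓ-isogeny of principally polarized abelian surfaces over 𝔽_q and P is the characteristic polynomial of Frobenius π_A on ker(f), then χ(A) ≡ P·Rec_q(P) mod ℓ.) -/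
/-!
An isotropic `K` of half the dimension is Lagrangian, so `ω` induces a perfect pairing
`K × V/K → 𝔽_ℓ`, and `ω(π x, π y) = q ω(x, y)` says that the map `π̄` induced on `V/K` is adjoint
to `q (π|_K)⁻¹`. With `M`, `D` the matrices of `π|_K`, `π̄` and `G` that of the pairing, this reads
`Mᵀ G D = q G`. Hence `χ(π) = χ(π|_K) χ(π̄) = P · χ(q M⁻¹)`, which is `P · Rec_q(P)` for a `2 × 2`
matrix `M`; and taking determinants, `det M · det D = q² ≠ 0`, so `d = det M ≠ 0`.
-/

open Polynomial Module
open LinearMap (BilinForm)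
open scoped Matrix

section

variable {R V : Type*} [CommRing R] [AddCommGroup V] [Module R V] {W : Submodule R V}
  {m n : Type*} [Fintype m] [Fintype n] [DecidableEq m] [DecidableEq n]

theorem Module.Basis.toMatrix_sumQuot (bW : Basis m R W) (bQ : Basis n R (V ⧸ W))
    (f : V →ₗ[R] V) (hf : ∀ x ∈ W, f x ∈ W) :
    ∃ B, LinearMap.toMatrix (bW.sumQuot bQ) (bW.sumQuot bQ) f =
      Matrix.fromBlocks (LinearMap.toMatrix bW bW (f.restrict hf)) B 0
        (LinearMap.toMatrix bQ bQ (W.mapQ W f hf)) := by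
  set T := LinearMap.toMatrix (bW.sumQuot bQ) (bW.sumQuot bQ) f
  refine ⟨T.toBlocks₁₂, ?_⟩
  conv_lhs => rw [← T.fromBlocks_toBlocks]
  congr 1
  · ext i k
    simp only [T, Matrix.toBlocks₁₁, LinearMap.toMatrix_apply, Matrix.of_apply, sumQuot_inl]
    exact sumQuot_repr_inl_of_mem bW bQ _ (hf _ (bW k).2) i
  · ext j k
    simp [T, Matrix.toBlocks₂₁, LinearMap.toMatrix_apply,
      (Submodule.Quotient.mk_eq_zero W).mpr (hf _ (bW k).2)]
  · ext j l
    simp only [T, Matrix.toBlocks₂₂, LinearMap.toMatrix_apply, Matrix.of_apply, sumQuot_repr_inr]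
    rw [← sumQuot_inr bW bQ l, W.mapQ_apply]
    rfl

end

theorem LinearMap.charpoly_eq_charpoly_restrict_mul_charpoly_mapQ {R V : Type*} [CommRing R]
    [AddCommGroup V] [Module R V] [Module.Free R V] [Module.Finite R V] (W : Submodule R V)
    [Module.Free R W] [Module.Finite R W] [Module.Free R (V ⧸ W)]
    (f : V →ₗ[R] V) (hf : ∀ x ∈ W, f x ∈ W) :
    f.charpoly = (f.restrict hf).charpoly * (W.mapQ W f hf).charpoly := by
  classical
  let bW := Module.Free.chooseBasis R W
  let bQ := Module.Free.chooseBasis R (V ⧸ W)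
  obtain ⟨B, hB⟩ := bW.toMatrix_sumQuot bQ f hf
  rw [← charpoly_toMatrix f (bW.sumQuot bQ), hB, Matrix.charpoly_fromBlocks_zero₂₁,
    charpoly_toMatrix, charpoly_toMatrix]

namespace Matrix

variable {n R : Type*} [Fintype n] [DecidableEq n] [CommRing R]

theorem isUnit_of_transpose_mul_mul_eq_smul {M G D : Matrix n n R} {q : R} (hG : IsUnit G)
    (hq : IsUnit q) (h : Mᵀ * G * D = q • G) : IsUnit M := by
  have hunit : IsUnit (Mᵀ * G * D).det := by
    rw [h, det_smul]
    exact (hq.pow _).mul ((isUnit_iff_isUnit_det G).mp hG)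
  rw [det_mul, det_mul, det_transpose] at hunit
  exact (isUnit_iff_isUnit_det M).mpr (isUnit_of_mul_isUnit_left (isUnit_of_mul_isUnit_left hunit))

theorem charpoly_eq_charpoly_smul_inv_of_transpose_mul_mul_eq_smul {M G D : Matrix n n R} {q : R}
    (hG : IsUnit G) (hM : IsUnit M) (h : Mᵀ * G * D = q • G) :
    D.charpoly = (q • M⁻¹).charpoly := by
  have hMt : IsUnit Mᵀ.det := by rw [det_transpose]; exact (isUnit_iff_isUnit_det M).mp hM
  have hD : D = G⁻¹ * (q • M⁻¹)ᵀ * G :=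
    calc D = G⁻¹ * (Mᵀ⁻¹ * (Mᵀ * (G * D))) := by
          rw [nonsing_inv_mul_cancel_left _ _ hMt,
            nonsing_inv_mul_cancel_left _ _ ((isUnit_iff_isUnit_det G).mp hG)]
      _ = G⁻¹ * (q • M⁻¹)ᵀ * G := by
          rw [← mul_assoc Mᵀ, h, transpose_smul, transpose_nonsing_inv]
          simp only [Matrix.mul_smul, Matrix.smul_mul, mul_assoc]
  rw [hD, ← hG.unit_spec, charpoly_units_conj', charpoly_transpose]

theorem trace_eq_of_charpoly_fin_two {M : Matrix (Fin 2) (Fin 2) R} {c d : R}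
    (hM : M.charpoly = X ^ 2 + C c * X + C d) : M.trace = -c := by
  rw [trace_eq_neg_charpoly_coeff, hM]
  simp [coeff_C]

theorem det_eq_of_charpoly_fin_two {M : Matrix (Fin 2) (Fin 2) R} {c d : R}
    (hM : M.charpoly = X ^ 2 + C c * X + C d) : M.det = d := by
  rw [det_eq_sign_charpoly_coeff, hM]
  simp [coeff_C]

theorem charpoly_smul_inv_fin_two {F : Type*} [Field F] {M : Matrix (Fin 2) (Fin 2) F} {c d : F}
    (hM : M.charpoly = X ^ 2 + C c * X + C d) (q : F) :
    (q • M⁻¹).charpoly = X ^ 2 + C (c * q / d) * X + C (q ^ 2 / d) := by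
  have hadj : M.adjugate.trace = M.trace := by
    rw [adjugate_fin_two, trace_fin_two, trace_fin_two]
    simp [add_comm]
  rw [charpoly_fin_two, trace_smul, det_smul, det_nonsing_inv, inv_def,
    det_eq_of_charpoly_fin_two hM, Ring.inverse_eq_inv, trace_smul, hadj,
    trace_eq_of_charpoly_fin_two hM, Fintype.card_fin, smul_eq_mul, smul_eq_mul]
  simp only [map_mul, map_neg, div_eq_mul_inv]
  ring

end Matrix

namespace LinearMap.BilinForm

variable {F V : Type*} [Field F] [AddCommGroup V] [Module F V]

theorem orthogonal_eq_self_of_isotropic [FiniteDimensional F V] {B : BilinForm F V}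
    (hB : B.Nondegenerate) {W : Submodule F V} (hW : ∀ x ∈ W, ∀ y ∈ W, B x y = 0)
    (hdim : 2 * finrank F W = finrank F V) : B.orthogonal W = W := by
  refine (Submodule.eq_of_le_of_finrank_le ?_ ?_).symm
  · intro x hx y hy
    exact hW y hy x hx
  · rw [finrank_orthogonal hB]
    omega

def quotientPairing (B : BilinForm F V) (K : Submodule F V)
    (hK : ∀ x ∈ K, ∀ y ∈ K, B x y = 0) : V ⧸ K →ₗ[F] Dual F K :=
  K.liftQ (K.subtype.dualMap ∘ₗ B.flip) fun v hv => LinearMap.mem_ker.mpr <| by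
    ext k
    exact hK k k.2 v hv

@[simp]
theorem quotientPairing_mk (B : BilinForm F V) (K : Submodule F V)
    (hK : ∀ x ∈ K, ∀ y ∈ K, B x y = 0) (v : V) (k : K) :
    B.quotientPairing K hK (Submodule.Quotient.mk v) k = B k v :=
  rfl

theorem injective_quotientPairing {B : BilinForm F V} {K : Submodule F V}
    (hK : ∀ x ∈ K, ∀ y ∈ K, B x y = 0) (h : B.orthogonal K ≤ K) :
    Function.Injective (B.quotientPairing K hK) := by
  rw [← LinearMap.ker_eq_bot, quotientPairing, Submodule.ker_liftQ_eq_bot]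
  intro v hv
  refine h fun k hk => ?_
  exact congr($(LinearMap.mem_ker.mp hv) ⟨k, hk⟩)

theorem dualMap_comp_quotientPairing_comp_mapQ {B : BilinForm F V} {K : Submodule F V}
    (hK : ∀ x ∈ K, ∀ y ∈ K, B x y = 0) {π : V →ₗ[F] V} {q : F}
    (hπ : ∀ x y, B (π x) (π y) = q * B x y) (hπK : ∀ x ∈ K, π x ∈ K) :
    (π.restrict hπK).dualMap ∘ₗ B.quotientPairing K hK ∘ₗ K.mapQ K π hπK =
      q • B.quotientPairing K hK := by
  ext v k
  simp [hπ]

end LinearMap.BilinForm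

/-- Linear-algebraic content of Proposition `siegel-elkies-charpoly`:
if `π` is a symplectic similitude of multiplier `q ≠ 0` on a 4-dimensional
symplectic space over `𝔽_ℓ`, and `K` is a 2-dimensional totally isotropic
`π`-stable subspace on which the characteristic polynomial of `π` is
`P = X² + cX + d`, then `d ≠ 0` and `charpoly π = P · Rec_q(P)`. -/
theorem siegel_elkies_charpoly (ℓ : ℕ) [Fact ℓ.Prime]
    (V : Type*) [AddCommGroup V] [Module (ZMod ℓ) V] [FiniteDimensional (ZMod ℓ) V]
    (hV : Module.finrank (ZMod ℓ) V = 4)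
    (ω : V →ₗ[ZMod ℓ] V →ₗ[ZMod ℓ] ZMod ℓ)
    (hAlt : ∀ x : V, ω x x = 0)
    (hNondeg : ∀ x : V, (∀ y : V, ω x y = 0) → x = 0)
    (q : ZMod ℓ) (hq : q ≠ 0)
    (π : V →ₗ[ZMod ℓ] V)
    (hπ : ∀ x y : V, ω (π x) (π y) = q * ω x y)
    (K : Submodule (ZMod ℓ) V)
    (hK2 : Module.finrank (ZMod ℓ) K = 2)
    (hKiso : ∀ x ∈ K, ∀ y ∈ K, ω x y = 0)
    (hKstab : ∀ x ∈ K, π x ∈ K)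
    (c d : ZMod ℓ)
    (hP : (π.restrict hKstab).charpoly = X ^ 2 + C c * X + C d) :
    d ≠ 0 ∧
      π.charpoly =
        (X ^ 2 + C c * X + C d) * (X ^ 2 + C (c * q / d) * X + C (q ^ 2 / d)) := by
  have hω : ω.Nondegenerate :=
    (LinearMap.IsAlt.isRefl hAlt).nondegenerate_iff_separatingLeft.mpr hNondeg
  have hLagrangian : BilinForm.orthogonal ω K = K :=
    BilinForm.orthogonal_eq_self_of_isotropic hω hKiso (by rw [hK2, hV])
  have hQ : finrank (ZMod ℓ) (V ⧸ K) = 2 := by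
    have := K.finrank_quotient_add_finrank
    omega
  let bK := finBasisOfFinrankEq (ZMod ℓ) K hK2
  let bQ := finBasisOfFinrankEq (ZMod ℓ) (V ⧸ K) hQ
  let Φ := LinearMap.linearEquivOfInjective (BilinForm.quotientPairing ω K hKiso)
    (BilinForm.injective_quotientPairing hKiso hLagrangian.le)
    (by rw [hQ, Subspace.dual_finrank_eq, hK2])
  set M := LinearMap.toMatrix bK bK (π.restrict hKstab)
  set G := LinearMap.toMatrix bQ bK.dualBasis Φ
  set D := LinearMap.toMatrix bQ bQ (K.mapQ K π hKstab)
  have hG : IsUnit G := (Matrix.isUnit_iff_isUnit_det G).mpr (Φ.isUnit_det bQ bK.dualBasis)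
  have hMGD : Mᵀ * G * D = q • G := by
    rw [← LinearMap.toMatrix_transpose, ← LinearMap.dualMap_def, ← LinearMap.toMatrix_comp,
      ← LinearMap.toMatrix_comp, ← map_smul]
    congr 1
    exact BilinForm.dualMap_comp_quotientPairing_comp_mapQ hKiso hπ hKstab
  have hM : IsUnit M := Matrix.isUnit_of_transpose_mul_mul_eq_smul hG hq.isUnit hMGD
  have hMP : M.charpoly = X ^ 2 + C c * X + C d := (LinearMap.charpoly_toMatrix _ bK).trans hP
  refine ⟨?_, ?_⟩
  · rw [← Matrix.det_eq_of_charpoly_fin_two hMP]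
    exact ((Matrix.isUnit_iff_isUnit_det M).mp hM).ne_zero
  · rw [LinearMap.charpoly_eq_charpoly_restrict_mul_charpoly_mapQ K π hKstab, hP,
      ← LinearMap.charpoly_toMatrix _ bQ,
      Matrix.charpoly_eq_charpoly_smul_inv_of_transpose_mul_mul_eq_smul hG hM hMGD,
      Matrix.charpoly_smul_inv_fin_two hMP]
end

section
/- Let ℓ be a prime, let V be a 4-dimensional vector space over 𝔽_ℓ = ℤ/ℓℤ with a nondegenerate alternating bilinear form ω, let q ∈ 𝔽_ℓ be nonzero, and let π : V → V be a linear endomorphism satisfying ω(π x, π y) = q·ω(x, y) for all x, y ∈ V. Suppose the characteristic polynomial of π factors as P·Q, where P = X² + cX + d is monic with d ≠ 0, Q = X² + (cq/d)·X + q²/d = Rec_q(P), and P and Q are coprime in 𝔽_ℓ[X]. Then ker(P(π)) is a 2-dimensional, π-stable, totally isotropic subspace of V. (This is case (1) of Proposition 'siegel-elkies-sufficient': if χ(A) mod ℓ splits as P·Rec_q(P) with P and Rec_q(P) coprime, then ℓ is an Elkies prime for the abelian surface A.) -/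
open Polynomial

section Aux

variable {K : Type*} [Field K] {V : Type*} [AddCommGroup V] [Module K V]

/-- A totally isotropic subspace for a bilinear form that is nondegenerate in
the first slot is at most half-dimensional. -/
lemma aux_isotropic_finrank_le [FiniteDimensional K V]
    (ω : V →ₗ[K] V →ₗ[K] K)
    (hNondeg : ∀ x : V, (∀ y : V, ω x y = 0) → x = 0)
    (W : Submodule K V) (hiso : ∀ x ∈ W, ∀ y ∈ W, ω x y = 0) :
    2 * Module.finrank K W ≤ Module.finrank K V := by
  classical
  set φ : V →ₗ[K] Module.Dual K W := W.subtype.dualMap.comp ω with hφ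
  have hωinj : Function.Injective ω := by
    rw [← LinearMap.ker_eq_bot]
    ext x
    simp only [LinearMap.mem_ker, Submodule.mem_bot]
    constructor
    · intro hx
      exact hNondeg x (fun y => by rw [hx]; rfl)
    · rintro rfl; simp
  have hωsurj : Function.Surjective ω :=
    (LinearMap.injective_iff_surjective_of_finrank_eq_finrank
      (Subspace.dual_finrank_eq).symm).mp hωinj
  have hdsurj : Function.Surjective (W.subtype.dualMap) :=
    LinearMap.dualMap_surjective_of_injective W.injective_subtype
  have hφsurj : Function.Surjective φ := hdsurj.comp hωsurj
  have hWker : W ≤ LinearMap.ker φ := by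
    intro w hw
    simp only [LinearMap.mem_ker, hφ, LinearMap.comp_apply]
    ext ⟨y, hy⟩
    simpa using hiso w hw y hy
  have h1 : Module.finrank K (LinearMap.range φ) + Module.finrank K (LinearMap.ker φ)
      = Module.finrank K V := LinearMap.finrank_range_add_finrank_ker φ
  have h2 : Module.finrank K (LinearMap.range φ) = Module.finrank K W := by
    rw [LinearMap.range_eq_top.mpr hφsurj]
    rw [finrank_top, Subspace.dual_finrank_eq]
  have h3 : Module.finrank K W ≤ Module.finrank K (LinearMap.ker φ) :=
    Submodule.finrank_mono hWker
  omega

/-- The kernel of `P(π)` is totally isotropic when `π` is a similitude of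
multiplier `q` and the characteristic-polynomial-style relation
`P(π) Q(π) = 0` holds with `Q = Rec_q P` coprime to `P`. -/
lemma aux_isotropic
    (ω : V →ₗ[K] V →ₗ[K] K)
    (q : K) (hq : q ≠ 0)
    (π : V →ₗ[K] V)
    (hπ : ∀ x y : V, ω (π x) (π y) = q * ω x y)
    (c d : K) (hd : d ≠ 0)
    (P Q : K[X])
    (hPdef : P = X ^ 2 + C c * X + C d)
    (hQdef : Q = X ^ 2 + C (c * q / d) * X + C (q ^ 2 / d))
    (hcoprime : IsCoprime P Q)
    (h0 : Polynomial.aeval π (P * Q) = 0) :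
    ∀ x ∈ LinearMap.ker (Polynomial.aeval π P),
      ∀ y ∈ LinearMap.ker (Polynomial.aeval π P), ω x y = 0 := by
  have hPapp : ∀ z : V, (Polynomial.aeval π P) z = π (π z) + c • π z + d • z := by
    intro z
    simp [hPdef, pow_two, Module.algebraMap_end_apply, Module.End.mul_apply,
      LinearMap.add_apply, LinearMap.smul_apply]
  have hQapp : ∀ z : V, (Polynomial.aeval π Q) z
      = π (π z) + (c * q / d) • π z + (q ^ 2 / d) • z := by
    intro z
    simp [hQdef, pow_two, Module.algebraMap_end_apply, Module.End.mul_apply,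
      LinearMap.add_apply, LinearMap.smul_apply]
  -- stability of the kernel
  have hstab : ∀ z ∈ LinearMap.ker (Polynomial.aeval π P),
      π z ∈ LinearMap.ker (Polynomial.aeval π P) := by
    intro z hz
    simp only [LinearMap.mem_ker] at hz ⊢
    have : (Polynomial.aeval π P) (π z) = π ((Polynomial.aeval π P) z) := by
      rw [hPapp, hPapp]
      simp [map_add, map_smul]
    rw [this, hz, map_zero]
  -- key identity
  have hkey : ∀ x y : V, d * ω (π (π x)) ((Polynomial.aeval π Q) y)
      = q ^ 2 * ω ((Polynomial.aeval π P) x) y := by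
    intro x y
    rw [hPapp, hQapp]
    have e1 : ω (π (π x)) (π (π y)) = q ^ 2 * ω x y := by
      rw [hπ, hπ]; ring
    have e2 : ω (π (π x)) (π y) = q * ω (π x) y := hπ (π x) y
    simp only [map_add, map_smul, LinearMap.add_apply, LinearMap.smul_apply,
      smul_eq_mul]
    rw [e1, e2]
    field_simp
    ring
  intro x hx y hy
  -- surjectivity of π on the kernel
  have hsurj : ∀ z ∈ LinearMap.ker (Polynomial.aeval π P),
      ∃ w ∈ LinearMap.ker (Polynomial.aeval π P), π w = z := by
    intro z hz
    refine ⟨-(d⁻¹ • (π z + c • z)), ?_, ?_⟩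
    · exact Submodule.neg_mem _ (Submodule.smul_mem _ _
        (Submodule.add_mem _ (hstab z hz) (Submodule.smul_mem _ _ hz)))
    · have hz' : π (π z) + c • π z + d • z = 0 := by
        rw [← hPapp]; exact hz
      have : π (π z) + c • π z = -(d • z) := by
        rw [eq_neg_iff_add_eq_zero]; linear_combination (norm := module) hz'
      rw [map_neg, map_smul, map_add, map_smul, this]
      rw [smul_neg, neg_neg, smul_smul, inv_mul_cancel₀ hd, one_smul]
  obtain ⟨x1, hx1, hx1e⟩ := hsurj x hx
  obtain ⟨x2, hx2, hx2e⟩ := hsurj x1 hx1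
  -- y is in the range of Q(π)
  obtain ⟨a, b, hab⟩ := hcoprime
  have hy' : (Polynomial.aeval π Q) ((Polynomial.aeval π b) y) = y := by
    have h1 : (Polynomial.aeval π (a * P + b * Q)) y = y := by
      rw [hab]; simp
    have h2 : (Polynomial.aeval π (a * P)) y = 0 := by
      rw [map_mul, Module.End.mul_apply, LinearMap.mem_ker.mp hy, map_zero]
    have h3 : (Polynomial.aeval π (b * Q)) y = (Polynomial.aeval π Q)
        ((Polynomial.aeval π b) y) := by
      rw [mul_comm, map_mul, Module.End.mul_apply]
    rw [map_add, LinearMap.add_apply, h2, zero_add, h3] at h1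
    exact h1
  have : d * ω x y = 0 := by
    calc d * ω x y
        = d * ω (π (π x2)) ((Polynomial.aeval π Q) ((Polynomial.aeval π b) y)) := by
          rw [hy', hx2e, hx1e]
      _ = q ^ 2 * ω ((Polynomial.aeval π P) x2) ((Polynomial.aeval π b) y) := hkey _ _
      _ = 0 := by rw [LinearMap.mem_ker.mp hx2]; simp
  exact (mul_eq_zero.mp this).resolve_left hd

end Aux

/-- Case (1) of Proposition `siegel-elkies-sufficient`: if the characteristic
polynomial of a symplectic similitude `π` of multiplier `q ≠ 0` on a
4-dimensional symplectic space over `𝔽_ℓ` factors as `P · Rec_q(P)` with the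
two factors coprime, then `ker P(π)` is a 2-dimensional `π`-stable totally
isotropic subspace. -/
theorem siegel_elkies_sufficient_coprime (ℓ : ℕ) [Fact ℓ.Prime]
    (V : Type*) [AddCommGroup V] [Module (ZMod ℓ) V] [FiniteDimensional (ZMod ℓ) V]
    (hV : Module.finrank (ZMod ℓ) V = 4)
    (ω : V →ₗ[ZMod ℓ] V →ₗ[ZMod ℓ] ZMod ℓ)
    (hAlt : ∀ x : V, ω x x = 0)
    (hNondeg : ∀ x : V, (∀ y : V, ω x y = 0) → x = 0)
    (q : ZMod ℓ) (hq : q ≠ 0)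
    (π : V →ₗ[ZMod ℓ] V)
    (hπ : ∀ x y : V, ω (π x) (π y) = q * ω x y)
    (c d : ZMod ℓ) (hd : d ≠ 0)
    (P Q : (ZMod ℓ)[X])
    (hPdef : P = X ^ 2 + C c * X + C d)
    (hQdef : Q = X ^ 2 + C (c * q / d) * X + C (q ^ 2 / d))
    (hcoprime : IsCoprime P Q)
    (hchar : π.charpoly = P * Q) :
    Module.finrank (ZMod ℓ) (LinearMap.ker (Polynomial.aeval π P)) = 2 ∧
      (∀ x ∈ LinearMap.ker (Polynomial.aeval π P),
        π x ∈ LinearMap.ker (Polynomial.aeval π P)) ∧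
      (∀ x ∈ LinearMap.ker (Polynomial.aeval π P),
        ∀ y ∈ LinearMap.ker (Polynomial.aeval π P), ω x y = 0) := by
  have h0 : Polynomial.aeval π (P * Q) = 0 := by
    rw [← hchar]; exact LinearMap.aeval_self_charpoly π
  -- totally isotropic: ker P(π)
  have hisoP : ∀ x ∈ LinearMap.ker (Polynomial.aeval π P),
      ∀ y ∈ LinearMap.ker (Polynomial.aeval π P), ω x y = 0 :=
    aux_isotropic ω q hq π hπ c d hd P Q hPdef hQdef hcoprime h0
  -- totally isotropic: ker Q(π), by the symmetric argument with Rec_q Q = P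
  have hd' : q ^ 2 / d ≠ 0 := div_ne_zero (pow_ne_zero 2 hq) hd
  have hPdef' : P = X ^ 2 + C ((c * q / d) * q / (q ^ 2 / d)) * X + C (q ^ 2 / (q ^ 2 / d)) := by
    rw [hPdef]
    congr 2
    · congr 1
      field_simp
    · congr 1
      field_simp
  have hisoQ : ∀ x ∈ LinearMap.ker (Polynomial.aeval π Q),
      ∀ y ∈ LinearMap.ker (Polynomial.aeval π Q), ω x y = 0 :=
    aux_isotropic ω q hq π hπ (c * q / d) (q ^ 2 / d) hd' Q P hQdef hPdef'
      hcoprime.symm (by rw [mul_comm]; exact h0)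
  -- π-stability
  have hstab : ∀ x ∈ LinearMap.ker (Polynomial.aeval π P),
      π x ∈ LinearMap.ker (Polynomial.aeval π P) := by
    intro z hz
    simp only [LinearMap.mem_ker] at hz ⊢
    have hcomm : (Polynomial.aeval π P) * π = π * (Polynomial.aeval π P) := by
      have h1 : Polynomial.aeval π (P * X) = (Polynomial.aeval π P) * π := by
        rw [map_mul, Polynomial.aeval_X]
      have h2 : Polynomial.aeval π (X * P) = π * (Polynomial.aeval π P) := by
        rw [map_mul, Polynomial.aeval_X]
      rw [← h1, ← h2, mul_comm P X]
    calc (Polynomial.aeval π P) (π z) = ((Polynomial.aeval π P) * π) z := rfl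
      _ = (π * (Polynomial.aeval π P)) z := by rw [hcomm]
      _ = π ((Polynomial.aeval π P) z) := rfl
      _ = 0 := by rw [hz, map_zero]
  -- the two kernels give a direct sum decomposition of V
  obtain ⟨a, b, hab⟩ := hcoprime
  have hinf : LinearMap.ker (Polynomial.aeval π P) ⊓ LinearMap.ker (Polynomial.aeval π Q) = ⊥ := by
    rw [Submodule.eq_bot_iff]
    rintro x ⟨hxP, hxQ⟩
    have h1 : (Polynomial.aeval π (a * P + b * Q)) x = x := by rw [hab]; simp
    rw [map_add, LinearMap.add_apply, map_mul, Module.End.mul_apply,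
      LinearMap.mem_ker.mp hxP, map_zero, map_mul, Module.End.mul_apply,
      LinearMap.mem_ker.mp hxQ, map_zero, add_zero] at h1
    exact h1.symm
  have hsup : LinearMap.ker (Polynomial.aeval π P) ⊔ LinearMap.ker (Polynomial.aeval π Q) = ⊤ := by
    rw [Submodule.eq_top_iff']
    intro x
    have h1 : (Polynomial.aeval π (a * P + b * Q)) x = x := by rw [hab]; simp
    rw [map_add, LinearMap.add_apply] at h1
    have hmem1 : (Polynomial.aeval π (b * Q)) x ∈ LinearMap.ker (Polynomial.aeval π P) := by
      rw [LinearMap.mem_ker, ← Module.End.mul_apply, ← map_mul]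
      have : P * (b * Q) = b * (P * Q) := by ring
      rw [this, map_mul, Module.End.mul_apply, h0]
      simp
    have hmem2 : (Polynomial.aeval π (a * P)) x ∈ LinearMap.ker (Polynomial.aeval π Q) := by
      rw [LinearMap.mem_ker, ← Module.End.mul_apply, ← map_mul]
      have : Q * (a * P) = a * (P * Q) := by ring
      rw [this, map_mul, Module.End.mul_apply, h0]
      simp
    rw [← h1]
    exact Submodule.add_mem _ (Submodule.mem_sup_right hmem2) (Submodule.mem_sup_left hmem1)
  have hdim : Module.finrank (ZMod ℓ) (LinearMap.ker (Polynomial.aeval π P))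
      + Module.finrank (ZMod ℓ) (LinearMap.ker (Polynomial.aeval π Q)) = 4 := by
    have := Submodule.finrank_sup_add_finrank_inf_eq
      (LinearMap.ker (Polynomial.aeval π P)) (LinearMap.ker (Polynomial.aeval π Q))
    rw [hinf, hsup, finrank_bot, finrank_top, hV, add_zero] at this
    exact this.symm
  have hb1 : 2 * Module.finrank (ZMod ℓ) (LinearMap.ker (Polynomial.aeval π P)) ≤ 4 := by
    rw [← hV]
    exact aux_isotropic_finrank_le ω hNondeg _ hisoP
  have hb2 : 2 * Module.finrank (ZMod ℓ) (LinearMap.ker (Polynomial.aeval π Q)) ≤ 4 := by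
    rw [← hV]
    exact aux_isotropic_finrank_le ω hNondeg _ hisoQ
  exact ⟨by omega, hstab, hisoP⟩
end

section
/- Let ℓ be a prime, let V be a 4-dimensional vector space over 𝔽_ℓ = ℤ/ℓℤ with a nondegenerate alternating bilinear form ω, let q ∈ 𝔽_ℓ be nonzero, and let π : V → V be a linear endomorphism satisfying ω(π x, π y) = q·ω(x, y) for all x, y ∈ V. If the characteristic polynomial of π splits into linear factors over 𝔽_ℓ, then there exists a 2-dimensional, π-stable, totally isotropic subspace of V. (This is case (2) of Proposition 'siegel-elkies-sufficient': if χ(A) is totally split modulo ℓ, then ℓ is an Elkies prime for the abelian surface A.) -/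
/-!
Since the characteristic polynomial splits, `π` has an eigenvector `v`, whose eigenvalue is
nonzero because a similitude with nonzero multiplier is injective. Then `π` preserves the
hyperplane `v^⊥ ⊇ ⟨v⟩`, and the map it induces on the plane `v^⊥ / ⟨v⟩` is annihilated by the
characteristic polynomial of `π`, so it also has an eigenvector. Any lift `w ∈ v^⊥` of it spans
with `v` a `π`-stable plane, which is isotropic because `ω v w = 0` and `ω` is alternating.
-/

open Polynomial

namespace Module.End

variable {K V : Type*} [Field K] [AddCommGroup V] [Module K V] {f : Module.End K V}

theorem aeval_restrict_apply {W : Submodule K V} (hW : ∀ x ∈ W, f x ∈ W) (p : K[X]) (x : W) :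
    (aeval (f.restrict hW) p x : V) = aeval f p x := by
  induction p using Polynomial.induction_on' with
  | add p r hp hr => simp only [map_add, LinearMap.add_apply, Submodule.coe_add, hp, hr]
  | monomial n a =>
    simp only [aeval_monomial, mul_apply, algebraMap_end_apply, Submodule.coe_smul]
    rw [pow_restrict]
    rfl

theorem aeval_mapQ_apply {S : Submodule K V} (hS : S ≤ S.comap f) (p : K[X]) (x : V) :
    aeval (S.mapQ S f hS) p (S.mkQ x) = S.mkQ (aeval f p x) := by
  induction p using Polynomial.induction_on' with
  | add p r hp hr => simp only [map_add, LinearMap.add_apply, hp, hr]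
  | monomial n a =>
    simp only [aeval_monomial, mul_apply, algebraMap_end_apply, map_smul]
    rw [← Submodule.mapQ_pow]
    rfl

theorem mapsTo_span_singleton {v : V} {μ : K} (hv : f v = μ • v) :
    ∀ x ∈ K ∙ v, f x ∈ K ∙ v := by
  intro x hx
  obtain ⟨a, rfl⟩ := Submodule.mem_span_singleton.mp hx
  rw [map_smul, hv]
  exact Submodule.smul_mem _ _ (Submodule.smul_mem _ _ (Submodule.mem_span_singleton_self v))

theorem mapsTo_span_pair {v w : V} {c : K} (hv : f v ∈ K ∙ v) (hw : f w - c • w ∈ K ∙ v) :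
    ∀ x ∈ Submodule.span K {v, w}, f x ∈ Submodule.span K {v, w} := by
  have hle : K ∙ v ≤ Submodule.span K {v, w} := Submodule.span_mono (by simp)
  suffices Submodule.span K {v, w} ≤ (Submodule.span K {v, w}).comap f from this
  rw [Submodule.span_le, Set.insert_subset_iff, Set.singleton_subset_iff]
  refine ⟨hle hv, ?_⟩
  rw [SetLike.mem_coe, Submodule.mem_comap, ← sub_add_cancel (f w) (c • w)]
  exact add_mem (hle hw) (Submodule.smul_mem _ _ (Submodule.subset_span (by simp)))

variable [FiniteDimensional K V] {p : K[X]}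

theorem exists_hasEigenvalue_of_aeval_eq_zero [Nontrivial V] (hp : p.Splits) (hp0 : p ≠ 0)
    (hf : aeval f p = 0) : ∃ μ, f.HasEigenvalue μ := by
  have hint : IsIntegral K f := Algebra.IsIntegral.isIntegral f
  obtain ⟨μ, hμ⟩ := (hp.of_dvd hp0 (minpoly.dvd K f hf)).exists_eval_eq_zero
    (minpoly.degree_pos hint).ne'
  exact ⟨μ, hasEigenvalue_of_isRoot hμ⟩

theorem exists_apply_sub_smul_mem_of_lt {S W : Submodule K V} (hSW : S < W)
    (hS : ∀ x ∈ S, f x ∈ S) (hW : ∀ x ∈ W, f x ∈ W) (hp : p.Splits) (hp0 : p ≠ 0)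
    (hf : aeval f p = 0) : ∃ w ∈ W, w ∉ S ∧ ∃ μ : K, f w - μ • w ∈ S := by
  set S' : Submodule K W := S.comap W.subtype
  have hS' : S' ≠ ⊤ := by
    obtain ⟨w, hwW, hwS⟩ := SetLike.exists_of_lt hSW
    exact fun h ↦ hwS (h ▸ Submodule.mem_top : (⟨w, hwW⟩ : W) ∈ S')
  have : Nontrivial (W ⧸ S') := Submodule.Quotient.nontrivial_iff.mpr hS'
  have hSf : S' ≤ S'.comap (f.restrict hW) := fun x hx ↦ hS x hx
  have hg : aeval (S'.mapQ S' (f.restrict hW) hSf) p = 0 := by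
    refine LinearMap.ext fun z ↦ ?_
    obtain ⟨x, rfl⟩ := S'.mkQ_surjective z
    have hx : aeval (f.restrict hW) p x = 0 := Subtype.ext <| by
      rw [aeval_restrict_apply, hf, LinearMap.zero_apply, Submodule.coe_zero]
    rw [aeval_mapQ_apply, hx, map_zero, LinearMap.zero_apply]
  obtain ⟨μ, hμ⟩ := exists_hasEigenvalue_of_aeval_eq_zero hp hp0 hg
  obtain ⟨z, hz⟩ := hμ.exists_hasEigenvector
  obtain ⟨w, rfl⟩ := S'.mkQ_surjective z
  refine ⟨w, w.2, fun hw ↦ hz.2 ((Submodule.Quotient.mk_eq_zero S').mpr hw), μ, ?_⟩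
  have h : S'.mkQ (f.restrict hW w - μ • w) = 0 := by
    rw [map_sub, map_smul, ← hz.apply_eq_smul, sub_eq_zero]
    rfl
  exact (Submodule.Quotient.mk_eq_zero S').mp h

end Module.End

theorem finrank_span_pair {K V : Type*} [Field K] [AddCommGroup V] [Module K V] {v w : V}
    (hv : v ≠ 0) (hw : w ∉ K ∙ v) : Module.finrank K (Submodule.span K {v, w}) = 2 := by
  have hli : LinearIndependent K ![v, w] := by
    rw [LinearIndependent.pair_iff' hv]
    rintro a rfl
    exact hw (Submodule.smul_mem _ _ (Submodule.mem_span_singleton_self v))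
  have := finrank_span_eq_card hli
  rwa [Matrix.range_cons_cons_empty, Fintype.card_fin] at this

namespace LinearMap

variable {K V : Type*} [Field K] [AddCommGroup V] [Module K V] {ω : V →ₗ[K] V →ₗ[K] K}

theorem IsAlt.apply_eq_zero_of_mem_span_pair (hω : ω.IsAlt) {v w : V} (hvw : ω v w = 0)
    {x y : V} (hx : x ∈ Submodule.span K {v, w}) (hy : y ∈ Submodule.span K {v, w}) :
    ω x y = 0 := by
  obtain ⟨a, b, rfl⟩ := Submodule.mem_span_pair.mp hx
  obtain ⟨c, d, rfl⟩ := Submodule.mem_span_pair.mp hy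
  simp [hω.self_eq_zero, hvw, hω.eq_iff.mp hvw]

theorem SeparatingLeft.finrank_ker_add_one [FiniteDimensional K V] (hω : ω.SeparatingLeft)
    {v : V} (hv : v ≠ 0) : Module.finrank K (ker (ω v)) + 1 = Module.finrank K V :=
  Module.Dual.finrank_ker_add_one_of_ne_zero fun h ↦ hv (hω v fun y ↦ by rw [h, zero_apply])

def IsSimilitude (ω : V →ₗ[K] V →ₗ[K] K) (q : K) (f : Module.End K V) : Prop :=
  ∀ x y, ω (f x) (f y) = q * ω x y

namespace IsSimilitude

variable {q : K} {f : Module.End K V}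

theorem eigenvalue_ne_zero (hf : ω.IsSimilitude q f) (hω : ω.SeparatingLeft) (hq : q ≠ 0)
    {μ : K} {v : V} (hv : f.HasEigenvector μ v) : μ ≠ 0 := by
  rintro rfl
  refine hv.2 (hω v fun y ↦ (mul_eq_zero.mp ?_).resolve_left hq)
  rw [← hf, hv.apply_eq_smul, zero_smul, map_zero, zero_apply]

theorem mapsTo_ker (hf : ω.IsSimilitude q f) {μ : K} (hμ : μ ≠ 0) {v : V} (hv : f v = μ • v) :
    ∀ y ∈ ker (ω v), f y ∈ ker (ω v) := by
  intro y hy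
  have h := hf v y
  rw [hv, mem_ker.mp hy, mul_zero, map_smul, smul_apply, smul_eq_mul] at h
  exact mem_ker.mpr ((mul_eq_zero.mp h).resolve_left hμ)

end IsSimilitude

end LinearMap

/-- Case (2) of Proposition `siegel-elkies-sufficient`: if the characteristic
polynomial of a symplectic similitude `π` of multiplier `q ≠ 0` on a
4-dimensional symplectic space over `𝔽_ℓ` splits into linear factors, then
there exists a 2-dimensional `π`-stable totally isotropic subspace. -/
theorem siegel_elkies_sufficient_split (ℓ : ℕ) [Fact ℓ.Prime]
    (V : Type*) [AddCommGroup V] [Module (ZMod ℓ) V] [FiniteDimensional (ZMod ℓ) V]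
    (hV : Module.finrank (ZMod ℓ) V = 4)
    (ω : V →ₗ[ZMod ℓ] V →ₗ[ZMod ℓ] ZMod ℓ)
    (hAlt : ∀ x : V, ω x x = 0)
    (hNondeg : ∀ x : V, (∀ y : V, ω x y = 0) → x = 0)
    (q : ZMod ℓ) (hq : q ≠ 0)
    (π : V →ₗ[ZMod ℓ] V)
    (hπ : ∀ x y : V, ω (π x) (π y) = q * ω x y)
    (hsplit : π.charpoly.Splits) :
    ∃ K : Submodule (ZMod ℓ) V,
      Module.finrank (ZMod ℓ) K = 2 ∧
      (∀ x ∈ K, π x ∈ K) ∧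
      (∀ x ∈ K, ∀ y ∈ K, ω x y = 0) := by
  have hπ : ω.IsSimilitude q π := hπ
  have : Nontrivial V := Module.nontrivial_of_finrank_eq_succ hV
  have hχ := π.aeval_self_charpoly
  obtain ⟨μ, hμ⟩ := Module.End.exists_hasEigenvalue_of_aeval_eq_zero hsplit
    π.charpoly_monic.ne_zero hχ
  obtain ⟨v, hv⟩ := hμ.exists_hasEigenvector
  have hvv := Module.End.mapsTo_span_singleton hv.apply_eq_smul
  have hW : Module.finrank (ZMod ℓ) (LinearMap.ker (ω v)) = 3 := by
    have := LinearMap.SeparatingLeft.finrank_ker_add_one hNondeg hv.2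
    omega
  have hvW : ZMod ℓ ∙ v < LinearMap.ker (ω v) :=
    Submodule.lt_of_le_of_finrank_lt_finrank
      ((Submodule.span_singleton_le_iff_mem _ _).mpr (hAlt v))
      (by rw [finrank_span_singleton hv.2, hW]; norm_num)
  obtain ⟨w, hwW, hwv, c, hc⟩ := Module.End.exists_apply_sub_smul_mem_of_lt hvW hvv
    (hπ.mapsTo_ker (hπ.eigenvalue_ne_zero hNondeg hq hv) hv.apply_eq_smul)
    hsplit π.charpoly_monic.ne_zero hχ
  refine ⟨Submodule.span (ZMod ℓ) {v, w}, finrank_span_pair hv.2 hwv,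
    Module.End.mapsTo_span_pair (hvv v (Submodule.mem_span_singleton_self v)) hc,
    fun x hx y hy ↦ LinearMap.IsAlt.apply_eq_zero_of_mem_span_pair hAlt hwW hx hy⟩
end

section
/- Let F be a real quadratic field with ring of integers ℤ_F, let q be a positive real number, and let B ⊆ ℤ_F be a nonzero ideal with absolute norm N(B) > 16q. Suppose ψ, ψ' ∈ ℤ_F satisfy |Tr_{F/ℚ}(ψ)| ≤ 4√q and Tr_{F/ℚ}(ψ)² − 4·N_{F/ℚ}(ψ) ≤ 4q, and likewise |Tr_{F/ℚ}(ψ')| ≤ 4√q and Tr_{F/ℚ}(ψ')² − 4·N_{F/ℚ}(ψ') ≤ 4q, and that ψ − ψ' ∈ B. Then ψ = ψ'. (This is Proposition 'crt-hilbert': if N(B) > 16q, the real Frobenius ψ_A of an abelian surface with RM by ℤ_F, which satisfies the Weil bounds |Tr(ψ_A)| ≤ 4√q and Disc(ℤ[ψ_A]) ≤ 4q, is uniquely determined by its residue modulo B.) -/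
open NumberField

/-- Proposition `crt-hilbert`: in a real quadratic field `F`, if an ideal `B`
of `ℤ_F` has norm `N(B) > 16q`, then an algebraic integer satisfying the Weil
bounds `|Tr(ψ)| ≤ 4√q` and `Tr(ψ)² − 4N(ψ) ≤ 4q` is uniquely determined by its
residue modulo `B`. -/
theorem crt_hilbert (F : Type*) [Field F] [NumberField F]
    (hdeg : Module.finrank ℚ F = 2)
    (htotreal : ∀ φ : F →+* ℂ, ∀ x : F, (φ x).im = 0)
    (q : ℝ) (hq : 0 < q)
    (B : Ideal (𝓞 F)) (hB : B ≠ ⊥)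
    (hBnorm : (Ideal.absNorm B : ℝ) > 16 * q)
    (ψ ψ' : 𝓞 F)
    (htr : |((Algebra.trace ℚ F (ψ : F) : ℝ))| ≤ 4 * Real.sqrt q)
    (hdisc : ((Algebra.trace ℚ F (ψ : F) : ℝ)) ^ 2
        - 4 * ((Algebra.norm ℚ (ψ : F) : ℝ)) ≤ 4 * q)
    (htr' : |((Algebra.trace ℚ F (ψ' : F) : ℝ))| ≤ 4 * Real.sqrt q)
    (hdisc' : ((Algebra.trace ℚ F (ψ' : F) : ℝ)) ^ 2
        - 4 * ((Algebra.norm ℚ (ψ' : F) : ℝ)) ≤ 4 * q)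
    (hmod : ψ - ψ' ∈ B) :
    ψ = ψ' := by
  by_contra hne
  set δ : 𝓞 F := ψ - ψ' with hδdef
  have hδ0 : δ ≠ 0 := sub_ne_zero.mpr hne
  -- the two embeddings of F into ℂ
  have hcard : Fintype.card (F →ₐ[ℚ] ℂ) = 2 := by
    rw [AlgHom.card]; exact hdeg
  let e := Fintype.equivFinOfCardEq hcard
  let τ : Fin 2 → (F →ₐ[ℚ] ℂ) := fun i => e.symm i
  have him : ∀ (i : Fin 2) (x : F), (τ i x).im = 0 := fun i x =>
    htotreal (τ i).toRingHom x
  have htrace : ∀ x : F, ((Algebra.trace ℚ F x : ℝ)) = (τ 0 x).re + (τ 1 x).re := by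
    intro x
    have h := trace_eq_sum_embeddings (K := ℚ) (L := F) (E := ℂ) (x := x)
    have h2 : (∑ σ : F →ₐ[ℚ] ℂ, σ x) = τ 0 x + τ 1 x := by
      rw [← e.symm.sum_comp (fun σ => σ x), Fin.sum_univ_two]
    rw [h2] at h
    have := congrArg Complex.re h
    simpa using this
  have hnorm : ∀ x : F, ((Algebra.norm ℚ x : ℝ)) = (τ 0 x).re * (τ 1 x).re := by
    intro x
    have h := Algebra.norm_eq_prod_embeddings ℚ ℂ (x := x)
    have h2 : (∏ σ : F →ₐ[ℚ] ℂ, σ x) = τ 0 x * τ 1 x := by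
      rw [← e.symm.prod_comp (fun σ => σ x), Fin.prod_univ_two]
    rw [h2] at h
    have h3 := congrArg Complex.re h
    rw [Complex.mul_re, him 0 x, him 1 x] at h3
    simpa using h3
  set a : F → ℝ := fun x => (τ 0 x).re with ha
  set b : F → ℝ := fun x => (τ 1 x).re with hb
  have sqq : Real.sqrt q ^ 2 = q := Real.sq_sqrt hq.le
  have hsq : (0:ℝ) ≤ Real.sqrt q := Real.sqrt_nonneg q
  -- difference bound from discriminant
  have key : ∀ x : 𝓞 F,
      ((Algebra.trace ℚ F (x : F) : ℝ)) ^ 2 - 4 * ((Algebra.norm ℚ (x : F) : ℝ)) ≤ 4 * q →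
      |a (x : F) - b (x : F)| ≤ 2 * Real.sqrt q := by
    intro x hx
    have h1 : (a (x : F) - b (x : F)) ^ 2 ≤ (2 * Real.sqrt q) ^ 2 := by
      rw [htrace (x : F), hnorm (x : F)] at hx
      nlinarith [hx, sqq]
    have h2 := Real.sqrt_le_sqrt h1
    rwa [Real.sqrt_sq_eq_abs, Real.sqrt_sq (by positivity)] at h2
  have kψ := key ψ hdisc
  have kψ' := key ψ' hdisc'
  -- trace and norm of δ
  have hδF : (δ : F) = (ψ : F) - (ψ' : F) := by push_cast [hδdef]; ring
  have htδ : |a (δ : F) + b (δ : F)| ≤ 8 * Real.sqrt q := by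
    have h1 : a (δ : F) + b (δ : F)
        = ((Algebra.trace ℚ F (ψ : F) : ℝ)) - ((Algebra.trace ℚ F (ψ' : F) : ℝ)) := by
      rw [← htrace, hδF, map_sub]
      push_cast; ring
    rw [h1]
    calc |((Algebra.trace ℚ F (ψ : F) : ℝ)) - ((Algebra.trace ℚ F (ψ' : F) : ℝ))|
        ≤ |((Algebra.trace ℚ F (ψ : F) : ℝ))| + |((Algebra.trace ℚ F (ψ' : F) : ℝ))| :=
          abs_sub _ _
      _ ≤ 8 * Real.sqrt q := by linarith
  have hdδ : |a (δ : F) - b (δ : F)| ≤ 4 * Real.sqrt q := by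
    have h1 : a (δ : F) - b (δ : F)
        = (a (ψ : F) - b (ψ : F)) - (a (ψ' : F) - b (ψ' : F)) := by
      simp only [ha, hb, hδF, map_sub, Complex.sub_re]; ring
    rw [h1]
    calc |(a (ψ : F) - b (ψ : F)) - (a (ψ' : F) - b (ψ' : F))|
        ≤ |a (ψ : F) - b (ψ : F)| + |a (ψ' : F) - b (ψ' : F)| := abs_sub _ _
      _ ≤ 4 * Real.sqrt q := by linarith
  -- norm bound
  have hNδ : |((Algebra.norm ℚ (δ : F) : ℝ))| ≤ 16 * q := by
    rw [hnorm]
    have e1 : a (δ : F) * b (δ : F)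
        = ((a (δ:F) + b (δ:F))^2 - (a (δ:F) - b (δ:F))^2) / 4 := by ring
    rw [e1]
    rw [abs_le]
    constructor
    · nlinarith [sq_abs (a (δ:F) - b (δ:F)), sq_abs (a (δ:F) + b (δ:F)),
        sq_nonneg (a (δ:F) + b (δ:F)), hdδ, sqq, abs_nonneg (a (δ:F) - b (δ:F))]
    · nlinarith [sq_abs (a (δ:F) - b (δ:F)), sq_abs (a (δ:F) + b (δ:F)),
        sq_nonneg (a (δ:F) - b (δ:F)), htδ, sqq, abs_nonneg (a (δ:F) + b (δ:F))]
  -- absNorm divides norm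
  have hdvd : (Ideal.absNorm B : ℤ) ∣ Algebra.norm ℤ δ :=
    Ideal.absNorm_dvd_norm_of_mem hmod
  have hnz : Algebra.norm ℤ δ ≠ 0 := by
    rw [Algebra.norm_ne_zero_iff]
    exact hδ0
  have hle : (Ideal.absNorm B : ℝ) ≤ |((Algebra.norm ℤ δ : ℤ) : ℝ)| := by
    have h := Int.le_of_dvd (abs_pos.mpr hnz) ((dvd_abs _ _).mpr hdvd)
    calc (Ideal.absNorm B : ℝ) = (((Ideal.absNorm B : ℤ) : ℝ)) := by push_cast; ring
      _ ≤ ((|Algebra.norm ℤ δ| : ℤ) : ℝ) := by exact_mod_cast h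
      _ = |((Algebra.norm ℤ δ : ℤ) : ℝ)| := by push_cast; ring
  have hcoe : ((Algebra.norm ℤ δ : ℤ) : ℝ) = ((Algebra.norm ℚ (δ : F) : ℝ)) := by
    rw [← Algebra.coe_norm_int]
    push_cast
    ring
  rw [hcoe] at hle
  linarith [hle, hNδ, hBnorm]
end
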